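/- Let X be a real or complex Banach space with the alternative Daugavet property and let T : X → X be a bounded linear operator such that T(B_X), the image of the closed unit ball, is an SCD set. Then max_{|θ|=1} ‖Id + θT‖ = 1 + ‖T‖, the maximum being over scalars θ of modulus one. -/

import Mathlib

open Bornology Metric Topology

/-- The slice of a set `A` determined by the functional `f` and `ε`:
`S(A,f,ε) = {x ∈ A | Re f(x) > sup_{a ∈ A} Re f(a) - ε}`. -/
def Slice (𝕜 : Type*) [RCLike 𝕜] {X : Type*} [SeminormedAddCommGroup X] [NormedSpace 𝕜 X]
    (A : Set X) (f : X →L[𝕜] 𝕜) (ε : ℝ) : Set X :=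
  {x ∈ A | sSup ((fun a => RCLike.re (f a)) '' A) - ε < RCLike.re (f x)}

/-- `S` is a slice of `A`. -/
def IsSlice (𝕜 : Type*) [RCLike 𝕜] {X : Type*} [SeminormedAddCommGroup X] [NormedSpace 𝕜 X]
    (A S : Set X) : Prop :=
  ∃ (f : X →L[𝕜] 𝕜) (ε : ℝ), 0 < ε ∧ S = Slice 𝕜 A f ε

/-- A countable family `V` of subsets of `A` is determining for `A`:
`A` is contained in the closed convex hull of any `B ⊆ A` meeting every `V n`. -/
def Determining {X : Type*} [SeminormedAddCommGroup X] [NormedSpace ℝ X]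
    (A : Set X) (V : ℕ → Set X) : Prop :=
  ∀ B ⊆ A, (∀ n, (B ∩ V n).Nonempty) → A ⊆ closure (convexHull ℝ B)

/-- `A` is a slicely countably determined set: there is a determining sequence of
slices of `A`. -/
def IsSCD (𝕜 : Type*) [RCLike 𝕜] {X : Type*} [SeminormedAddCommGroup X] [NormedSpace ℝ X]
    [NormedSpace 𝕜 X] (A : Set X) : Prop :=
  ∃ S : ℕ → Set X, (∀ n, IsSlice 𝕜 A (S n)) ∧ Determining A S

/-- The operator `T` satisfies the alternative Daugavet equation
`max_{|θ|=1} ‖Id + θT‖ = 1 + ‖T‖`. -/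
def AlternativeDaugavetEquation (𝕜 : Type*) [RCLike 𝕜] {X : Type*} [NormedAddCommGroup X]
    [NormedSpace 𝕜 X] (T : X →L[𝕜] X) : Prop :=
  sSup ((fun θ : 𝕜 => ‖ContinuousLinearMap.id 𝕜 X + θ • T‖) '' {θ : 𝕜 | ‖θ‖ = 1}) = 1 + ‖T‖

/-- `X` has the alternative Daugavet property: every rank-one operator `x ↦ f(x) • y`
satisfies the alternative Daugavet equation. -/
def AlternativeDaugavetProperty (𝕜 : Type*) [RCLike 𝕜] (X : Type*) [NormedAddCommGroup X]
    [NormedSpace 𝕜 X] : Prop :=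
  ∀ (f : X →L[𝕜] 𝕜) (y : X), AlternativeDaugavetEquation 𝕜 (f.smulRight y)

section AuxSCD
variable {𝕜 : Type*} [RCLike 𝕜] {X : Type*} [NormedAddCommGroup X] [NormedSpace 𝕜 X]

variable {𝕜 : Type*} [RCLike 𝕜] {X : Type*} [NormedAddCommGroup X] [NormedSpace 𝕜 X]

/-- Near-norming vector with real positive value. -/
private lemma exists_re_apply_gt (φ : X →L[𝕜] 𝕜) {δ : ℝ} (hδ : 0 < δ) :
    ∃ x : X, ‖x‖ ≤ 1 ∧ ‖φ‖ - δ < RCLike.re (φ x) := by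
  rcases lt_or_ge (‖φ‖ - δ) 0 with h | h
  · exact ⟨0, by simp, by simpa using h⟩
  · have h2 : ‖φ‖ - δ < ‖φ‖ := by linarith
    obtain ⟨x, hx1, hx2⟩ := φ.exists_lt_apply_of_lt_opNorm h2
    have hφx : φ x ≠ 0 := by
      intro h0
      rw [h0, norm_zero] at hx2
      linarith
    refine ⟨((‖φ x‖ : 𝕜) / φ x) • x, ?_, ?_⟩
    · rw [norm_smul, norm_div, RCLike.norm_ofReal, abs_of_nonneg (norm_nonneg _),
        div_self (norm_ne_zero_iff.2 hφx), one_mul]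
      exact hx1.le
    · rw [map_smul, smul_eq_mul, div_mul_cancel₀ _ hφx, RCLike.ofReal_re]
      exact hx2

/-- The sup of `re ∘ f` over `T(B_X)` equals `‖f ∘ T‖`. -/
private lemma sSup_re_image_eq (T : X →L[𝕜] X) (f : X →L[𝕜] 𝕜) :
    sSup ((fun a => RCLike.re (f a)) '' (T '' Metric.closedBall (0 : X) 1)) = ‖f.comp T‖ := by
  set s := (fun a => RCLike.re (f a)) '' (T '' Metric.closedBall (0 : X) 1) with hs
  have hub : ∀ y ∈ s, y ≤ ‖f.comp T‖ := by
    rintro y ⟨a, ⟨x, hx, rfl⟩, rfl⟩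
    rw [mem_closedBall_zero_iff] at hx
    calc RCLike.re (f (T x)) ≤ ‖f (T x)‖ := RCLike.re_le_norm _
      _ = ‖(f.comp T) x‖ := rfl
      _ ≤ ‖f.comp T‖ * ‖x‖ := (f.comp T).le_opNorm x
      _ ≤ ‖f.comp T‖ * 1 := by
          exact mul_le_mul_of_nonneg_left hx (norm_nonneg _)
      _ = ‖f.comp T‖ := mul_one _
  have hne : s.Nonempty := ⟨RCLike.re (f (T 0)), ⟨T 0, ⟨0, by simp, rfl⟩, rfl⟩⟩
  have hbdd : BddAbove s := ⟨‖f.comp T‖, fun y hy => hub y hy⟩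
  refine le_antisymm (csSup_le hne hub) ?_
  refine le_of_forall_pos_le_add fun δ hδ => ?_
  obtain ⟨x, hx1, hx2⟩ := exists_re_apply_gt (f.comp T) hδ
  have hmem : RCLike.re (f (T x)) ∈ s := ⟨T x, ⟨x, by rwa [mem_closedBall_zero_iff], rfl⟩, rfl⟩
  have := le_csSup hbdd hmem
  have hfx : RCLike.re ((f.comp T) x) = RCLike.re (f (T x)) := rfl
  rw [hfx] at hx2
  linarith


variable {𝕜 : Type*} [RCLike 𝕜] {X : Type*} [NormedAddCommGroup X] [NormedSpace 𝕜 X]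

/-- ADP alignment: in every "band" of a norm-one functional there are points aligned with any
prescribed unit vector, up to a unimodular factor. -/
private lemma adp_alignment (hADP : AlternativeDaugavetProperty 𝕜 X)
    {h : X →L[𝕜] 𝕜} (hh : ‖h‖ = 1) {q : X} (hq : ‖q‖ = 1) {γ : ℝ} (hγ : 0 < γ) :
    ∃ (v : X) (ω : 𝕜), ‖v‖ ≤ 1 ∧ ‖ω‖ = 1 ∧ 1 - γ < ‖h v‖ ∧
      2 - γ < ‖v + (ω * h v) • q‖ := by
  have hR : ‖h.smulRight q‖ = 1 := by
    rw [ContinuousLinearMap.norm_smulRight_apply, hh, hq, one_mul]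
  have hsup := hADP h q
  unfold AlternativeDaugavetEquation at hsup
  rw [hR] at hsup
  have hne : ((fun θ : 𝕜 => ‖ContinuousLinearMap.id 𝕜 X + θ • h.smulRight q‖) ''
      {θ : 𝕜 | ‖θ‖ = 1}).Nonempty := ⟨_, ⟨1, by simp, rfl⟩⟩
  have hlt : (2 : ℝ) - γ / 2 < sSup ((fun θ : 𝕜 =>
      ‖ContinuousLinearMap.id 𝕜 X + θ • h.smulRight q‖) '' {θ : 𝕜 | ‖θ‖ = 1}) := by
    rw [hsup]; linarith
  obtain ⟨val, ⟨ω, hω, rfl⟩, hval⟩ := exists_lt_of_lt_csSup hne hlt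
  have hω' : ‖ω‖ = 1 := hω
  obtain ⟨v, hv1, hv2⟩ :=
    (ContinuousLinearMap.id 𝕜 X + ω • h.smulRight q).exists_lt_apply_of_lt_opNorm hval
  have happ : (ContinuousLinearMap.id 𝕜 X + ω • h.smulRight q) v = v + (ω * h v) • q := by
    simp [ContinuousLinearMap.smulRight_apply, smul_smul]
  rw [happ] at hv2
  have hnq : ‖(ω * h v) • q‖ = ‖h v‖ := by
    rw [norm_smul, hq, mul_one, norm_mul, hω', one_mul]
  have htri : ‖v + (ω * h v) • q‖ ≤ ‖v‖ + ‖h v‖ := by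
    calc ‖v + (ω * h v) • q‖ ≤ ‖v‖ + ‖(ω * h v) • q‖ := norm_add_le _ _
      _ = ‖v‖ + ‖h v‖ := by rw [hnq]
  exact ⟨v, ω, hv1.le, hω', by linarith, by linarith⟩


private lemma mul_min_div_lt {a e g : ℝ} (ha : 0 ≤ a) (he : 0 < e) (hg : g ≤ e / (a + 1)) :
    a * g < e := by
  have h1 : g * (a + 1) ≤ e := by
    rw [← le_div_iff₀ (by linarith : (0:ℝ) < a + 1)]
    exact hg
  rcases le_or_gt g 0 with h | h
  · nlinarith
  · nlinarith

/-- One step of the chain construction. -/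
private lemma step_exists (hADP : AlternativeDaugavetProperty 𝕜 X) (T : X →L[𝕜] X)
    (f : X →L[𝕜] 𝕜) {e : ℝ} (he : 0 < e) {p : X} (hp : ‖p‖ = 1) {γ : ℝ} (hγ : 0 < γ) :
    ∃ (u b : X) (τ : 𝕜), ‖u‖ ≤ 1 ∧ ‖τ‖ = 1 ∧ b = τ • T u ∧
      b ∈ Slice 𝕜 (T '' Metric.closedBall (0 : X) 1) f e ∧ 2 - γ < ‖p + u‖ := by
  set φ := f.comp T with hφdef
  clear_value φ
  have hsup := sSup_re_image_eq T f
  by_cases hφ : φ = 0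
  · -- degenerate slice: the slice is everything
    refine ⟨p, T p, 1, le_of_eq hp, norm_one, by rw [one_smul], ?_, ?_⟩
    · rw [← hφdef] at hsup
      rw [hφ] at hsup
      constructor
      · exact ⟨p, by simp [mem_closedBall_zero_iff, hp.le], rfl⟩
      · have h1 : f (T p) = φ p := by rw [hφdef]; rfl
        rw [h1, hφ, hsup]
        simp [he]
    · have h2 : ‖p + p‖ = 2 := by
        rw [← two_smul 𝕜 p, norm_smul, hp, mul_one]
        simp
      rw [h2]; linarith
  · -- main case
    have hφpos : 0 < ‖φ‖ := norm_pos_iff.2 hφ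
    set h : X →L[𝕜] 𝕜 := (((‖φ‖⁻¹ : ℝ)) : 𝕜) • φ with hhdef
    clear_value h
    have hh : ‖h‖ = 1 := by
      have h1 := norm_smul (α := 𝕜) (β := X →L[𝕜] 𝕜) (((‖φ‖⁻¹ : ℝ)) : 𝕜) φ
      rw [hhdef, h1, RCLike.norm_ofReal, abs_of_pos (inv_pos.2 hφpos),
        inv_mul_cancel₀ hφpos.ne']
    set γ' := min (min (γ / 2) (1 / 2)) (e / (‖φ‖ + 1)) with hγ'def
    clear_value γ'
    have hγ'pos : 0 < γ' := by
      rw [hγ'def]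
      exact lt_min (lt_min (by linarith) (by norm_num)) (by positivity)
    have hγ'le : γ' ≤ γ / 2 := by
      rw [hγ'def]; exact le_trans (min_le_left _ _) (min_le_left _ _)
    have hγ'half : γ' ≤ 1 / 2 := by
      rw [hγ'def]; exact le_trans (min_le_left _ _) (min_le_right _ _)
    have hγ'e : γ' ≤ e / (‖φ‖ + 1) := by
      rw [hγ'def]; exact min_le_right _ _
    obtain ⟨v, ω, hv1, hω, hhv, hal⟩ := adp_alignment hADP hh hp hγ'pos
    set c : 𝕜 := ω * h v with hcdef
    clear_value c
    have hcnorm : ‖c‖ = ‖h v‖ := by rw [hcdef, norm_mul, hω, one_mul]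
    have hcpos : 0 < ‖c‖ := by rw [hcnorm]; linarith
    have hc0 : c ≠ 0 := norm_pos_iff.1 hcpos
    have hcle : ‖c‖ ≤ 1 := by
      rw [hcnorm]
      calc ‖h v‖ ≤ ‖h‖ * ‖v‖ := h.le_opNorm v
        _ ≤ 1 * 1 := by rw [hh]; exact mul_le_mul_of_nonneg_left hv1 zero_le_one
        _ = 1 := one_mul 1
    set u : X := ((‖c‖ : 𝕜) / c) • v with hudef
    clear_value u
    have hphase : ‖(‖c‖ : 𝕜) / c‖ = 1 := by
      rw [norm_div, RCLike.norm_ofReal, abs_of_pos hcpos, div_self hcpos.ne']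
    have hu1 : ‖u‖ ≤ 1 := by
      rw [hudef, norm_smul, hphase, one_mul]; exact hv1
    have hcR : ((‖c‖ : ℝ) : 𝕜) ≠ 0 := RCLike.ofReal_ne_zero.2 hcpos.ne'
    have hcc2 : (c / (‖c‖ : 𝕜)) * ((‖c‖ : 𝕜) / c) = 1 := by
      rw [div_mul_div_comm, mul_comm]
      exact div_self (mul_ne_zero hcR hc0)
    have hcc3 : c / (‖c‖ : 𝕜) * (‖c‖ : 𝕜) = c := div_mul_cancel₀ c hcR
    have hphase2 : ‖c / (‖c‖ : 𝕜)‖ = 1 := by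
      rw [norm_div, RCLike.norm_ofReal, abs_of_pos hcpos, div_self hcpos.ne']
    have hiden : (c / (‖c‖ : 𝕜)) • (u + (‖c‖ : 𝕜) • p) = v + c • p := by
      rw [smul_add, hudef, smul_smul, hcc2, one_smul, smul_smul, hcc3]
    have haln : 2 - γ' < ‖u + (‖c‖ : 𝕜) • p‖ := by
      have he1 : ‖v + c • p‖ = ‖u + (‖c‖ : 𝕜) • p‖ := by
        rw [← hiden, norm_smul, hphase2, one_mul]
      rw [← he1]; exact hal
    have halp : 2 - γ < ‖p + u‖ := by
      have hsplit : u + (‖c‖ : 𝕜) • p = (p + u) + (((‖c‖ : 𝕜) - 1) • p) := by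
        rw [sub_smul, one_smul]; abel
      have hb : ‖((‖c‖ : 𝕜) - 1) • p‖ ≤ γ' := by
        rw [norm_smul, hp, mul_one]
        have he2 : ‖(‖c‖ : 𝕜) - (1 : 𝕜)‖ = |‖c‖ - 1| := by
          rw [show ((1 : 𝕜) = ((1 : ℝ) : 𝕜)) by norm_num, ← RCLike.ofReal_sub,
            RCLike.norm_ofReal]
        rw [he2, abs_of_nonpos (by linarith)]
        have : 1 - γ' < ‖c‖ := by rw [hcnorm]; exact hhv
        linarith
      have htri := norm_add_le (p + u) (((‖c‖ : 𝕜) - 1) • p)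
      rw [← hsplit] at htri
      calc 2 - γ ≤ 2 - 2 * γ' := by linarith
        _ < ‖p + u‖ := by linarith
    -- slice membership
    set m : 𝕜 := f (T v) with hmdef
    clear_value m
    have hmφ : m = φ v := by rw [hmdef, hφdef]; rfl
    have hmh : ‖m‖ = ‖φ‖ * ‖h v‖ := by
      rw [hmφ]
      have hv' : h v = (((‖φ‖⁻¹ : ℝ)) : 𝕜) • φ v := by
        rw [hhdef]; rfl
      rw [hv', norm_smul, RCLike.norm_ofReal, abs_of_pos (inv_pos.2 hφpos)]
      field_simp
    have hm_lb : ‖φ‖ - e < ‖m‖ := by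
      have h1 : ‖φ‖ * (1 - γ') < ‖m‖ := by
        rw [hmh]
        exact mul_lt_mul_of_pos_left hhv hφpos
      have h2 : ‖φ‖ * γ' < e := mul_min_div_lt (norm_nonneg φ) he hγ'e
      have h3 : ‖φ‖ * (1 - γ') = ‖φ‖ - ‖φ‖ * γ' := by ring
      linarith
    have hm_pos : 0 < ‖m‖ := by
      have h0 : 0 < ‖φ‖ * (1 - γ') := mul_pos hφpos (by linarith)
      have h1 : ‖φ‖ * (1 - γ') < ‖m‖ := by
        rw [hmh]
        exact mul_lt_mul_of_pos_left hhv hφpos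
      linarith
    have hm0 : m ≠ 0 := norm_pos_iff.1 hm_pos
    set b : X := ((‖m‖ : 𝕜) / m) • T v with hbdef
    clear_value b
    set τ : 𝕜 := ((‖m‖ : 𝕜) / m) * (c / (‖c‖ : 𝕜)) with hτdef
    clear_value τ
    have hmphase : ‖(‖m‖ : 𝕜) / m‖ = 1 := by
      rw [norm_div, RCLike.norm_ofReal, abs_of_pos hm_pos, div_self hm_pos.ne']
    have hτ1 : ‖τ‖ = 1 := by
      rw [hτdef, norm_mul, hphase2, mul_one, hmphase]
    have hTu : T u = ((‖c‖ : 𝕜) / c) • T v := by rw [hudef, map_smul]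
    have hscal : τ * ((‖c‖ : 𝕜) / c) = (‖m‖ : 𝕜) / m := by
      rw [hτdef, mul_assoc, hcc2, mul_one]
    have hbτ : b = τ • T u := by
      rw [hbdef, hTu, smul_smul, hscal]
    have hbA : b ∈ T '' Metric.closedBall (0 : X) 1 := by
      refine ⟨((‖m‖ : 𝕜) / m) • v, ?_, by rw [map_smul, hbdef]⟩
      rw [mem_closedBall_zero_iff, norm_smul, hmphase, one_mul]
      exact hv1
    have hfb : f b = ((‖m‖ : ℝ) : 𝕜) := by
      rw [hbdef, map_smul, smul_eq_mul, ← hmdef, div_mul_cancel₀ _ hm0]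
    refine ⟨u, b, τ, hu1, hτ1, hbτ, ⟨hbA, ?_⟩, halp⟩
    rw [← hφdef] at hsup
    rw [hsup, hfb, RCLike.ofReal_re]
    linarith


variable [NormedSpace ℝ X] [IsScalarTower ℝ 𝕜 X] [CompleteSpace X]

variable {𝕜 : Type*} [RCLike 𝕜] {X : Type*} [NormedAddCommGroup X]
    [NormedSpace ℝ X] [NormedSpace 𝕜 X] [IsScalarTower ℝ 𝕜 X] [CompleteSpace X]

set_option maxHeartbeats 2000000 in
private lemma key_pair (hADP : AlternativeDaugavetProperty 𝕜 X) (T : X →L[𝕜] X) (hT : T ≠ 0)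
    (S : ℕ → Set X) (hSl : ∀ n, IsSlice 𝕜 (T '' Metric.closedBall (0 : X) 1) (S n))
    (hDet : Determining (T '' Metric.closedBall (0 : X) 1) S)
    {ε : ℝ} (hε : 0 < ε) :
    ∃ (θ : 𝕜) (z : X), ‖θ‖ = 1 ∧ ‖z‖ ≤ 1 ∧ 1 + ‖T‖ - ε < ‖z + θ • T z‖ := by
  classical
  -- slice data
  have hSl' : ∀ n, ∃ (f : X →L[𝕜] 𝕜) (e : ℝ), 0 < e ∧
      S n = Slice 𝕜 (T '' Metric.closedBall (0 : X) 1) f e := hSl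
  choose fn en hen hSn using hSl'
  -- constants
  set M := ‖T‖ with hMdef
  have hM0 : 0 < M := norm_pos_iff.2 hT
  set μ := min ε (min M 1) with hμdef
  have hμ0 : 0 < μ := lt_min hε (lt_min hM0 one_pos)
  have hμε : μ ≤ ε := min_le_left _ _
  have hμM : μ ≤ M := le_trans (min_le_right _ _) (min_le_left _ _)
  have hμ1 : μ ≤ 1 := le_trans (min_le_right _ _) (min_le_right _ _)
  set η := μ / (8 * (M + 1)) with hηdef
  have hη0 : 0 < η := by rw [hηdef]; positivity
  have hηeq : η * (8 * (M + 1)) = μ := by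
    rw [hηdef]; field_simp
  have hηM : η * (M + 1) ≤ μ / 8 := by nlinarith
  have hη1 : η ≤ 1 / 8 := by nlinarith
  have hηM' : η ≤ M / 8 := by nlinarith
  set β := η / 16 with hβdef
  have hβ0 : 0 < β := by rw [hβdef]; positivity
  have hβ2 : β ≤ 1 / 2 := by rw [hβdef]; nlinarith
  have hβ1 : β < 1 := by linarith
  clear_value β η μ M
  -- the point x with ‖T x‖ near ‖T‖
  obtain ⟨x, hx1, hx2⟩ := T.exists_lt_apply_of_lt_opNorm (show M - η < ‖T‖ by
    rw [← hMdef]; linarith)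
  have hTx0 : T x ≠ 0 := by
    intro h0
    rw [h0, norm_zero] at hx2
    nlinarith
  have hTxM : ‖T x‖ ≤ M := by
    calc ‖T x‖ ≤ ‖T‖ * ‖x‖ := T.le_opNorm x
      _ ≤ ‖T‖ * 1 := mul_le_mul_of_nonneg_left hx1.le (norm_nonneg _)
      _ = M := by rw [mul_one, hMdef]
  set p0 : X := ((‖T x‖ : ℝ) : 𝕜)⁻¹ • T x with hp0def
  have hp0 : ‖p0‖ = 1 := norm_smul_inv_norm hTx0
  -- packaged step
  have hstep2 : ∀ (p : X), ‖p‖ = 1 → ∀ k : ℕ, ∃ (u b : X) (τ : 𝕜),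
      ‖u‖ ≤ 1 ∧ ‖τ‖ = 1 ∧ b = τ • T u ∧ b ∈ S k ∧
      2 - β ^ (k + 2) < ‖p + u‖ ∧
      1 + β ^ (k + 1) - β ^ (k + 2) ≤ ‖p + β ^ (k + 1) • u‖ ∧
      ‖p + β ^ (k + 1) • u‖ ≤ 1 + β ^ (k + 1) := by
    intro p hp k
    obtain ⟨u, b, τ, h1, h2, h3, h4, h5⟩ :=
      step_exists hADP T (fn k) (hen k) hp (pow_pos hβ0 (k + 2))
    rw [← hSn k] at h4
    refine ⟨u, b, τ, h1, h2, h3, h4, h5, ?_, ?_⟩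
    · have hsplit : p + β ^ (k + 1) • u = (p + u) - (1 - β ^ (k + 1)) • u := by
        rw [sub_smul, one_smul]; abel
      have hpow1 : β ^ (k + 1) ≤ 1 := pow_le_one₀ hβ0.le hβ1.le
      have h6 : ‖(1 - β ^ (k + 1)) • u‖ ≤ 1 - β ^ (k + 1) := by
        rw [norm_smul, Real.norm_eq_abs, abs_of_nonneg (by linarith)]
        nlinarith [pow_pos hβ0 (k+1)]
      have h7 := norm_sub_norm_le (p + u) ((1 - β ^ (k + 1)) • u)
      rw [← hsplit] at h7
      linarith
    · calc ‖p + β ^ (k + 1) • u‖ ≤ ‖p‖ + ‖β ^ (k + 1) • u‖ := norm_add_le _ _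
        _ ≤ 1 + β ^ (k + 1) := by
          rw [hp, norm_smul, Real.norm_eq_abs, abs_of_nonneg (pow_pos hβ0 _).le]
          nlinarith [pow_pos hβ0 (k+1), norm_nonneg u]
  choose uF bF τF hu1 hτ1 hbτF hbSF halF hqlowF hqhighF using hstep2
  have hq0 : ∀ (p : X) (hp : ‖p‖ = 1) (k : ℕ), 1 ≤ ‖p + β ^ (k + 1) • uF p hp k‖ := by
    intro p hp k
    have h1 := hqlowF p hp k
    have h2 : β ^ (k + 2) ≤ β ^ (k + 1) :=
      pow_le_pow_of_le_one hβ0.le hβ1.le (by omega)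
    linarith
  let tipF : ℕ → {w : X // ‖w‖ = 1} := fun n =>
    Nat.rec ⟨p0, hp0⟩ (fun k ih =>
      ⟨(‖ih.1 + β ^ (k + 1) • uF ih.1 ih.2 k‖⁻¹ : ℝ) •
        (ih.1 + β ^ (k + 1) • uF ih.1 ih.2 k), by
          have h0 := hq0 ih.1 ih.2 k
          have hpos : (0:ℝ) < ‖ih.1 + β ^ (k + 1) • uF ih.1 ih.2 k‖ := by linarith
          rw [norm_smul, Real.norm_eq_abs, abs_of_pos (inv_pos.2 hpos),
            inv_mul_cancel₀ hpos.ne']⟩) n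
  let p : ℕ → X := fun n => (tipF n).1
  let u : ℕ → X := fun n => uF (p n) (tipF n).2 n
  let b : ℕ → X := fun n => bF (p n) (tipF n).2 n
  let τ : ℕ → 𝕜 := fun n => τF (p n) (tipF n).2 n
  have hpn : ∀ n, ‖p n‖ = 1 := fun n => (tipF n).2
  have hp00 : p 0 = p0 := rfl
  have hpsucc : ∀ n, p (n + 1) =
      (‖p n + β ^ (n + 1) • u n‖⁻¹ : ℝ) • (p n + β ^ (n + 1) • u n) := fun n => rfl
  have hu_le : ∀ n, ‖u n‖ ≤ 1 := fun n => hu1 (p n) (tipF n).2 n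
  have hτ_n : ∀ n, ‖τ n‖ = 1 := fun n => hτ1 (p n) (tipF n).2 n
  have hbτ : ∀ n, b n = τ n • T (u n) := fun n => hbτF (p n) (tipF n).2 n
  have hbS : ∀ n, b n ∈ S n := fun n => hbSF (p n) (tipF n).2 n
  have hq_lb : ∀ n, 1 + β ^ (n + 1) - β ^ (n + 2) ≤ ‖p n + β ^ (n + 1) • u n‖ :=
    fun n => hqlowF (p n) (tipF n).2 n
  have hq_lb1 : ∀ n, 1 ≤ ‖p n + β ^ (n + 1) • u n‖ := fun n => hq0 (p n) (tipF n).2 n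
  have hq_ub : ∀ n, ‖p n + β ^ (n + 1) • u n‖ ≤ 1 + β ^ (n + 1) :=
    fun n => hqhighF (p n) (tipF n).2 n
  clear_value τ
  clear_value b
  clear_value u
  clear_value p
  clear_value tipF
  -- Cauchy estimates
  have hdist : ∀ n, dist (p n) (p (n + 1)) ≤ 2 * β * β ^ n := by
    intro n
    have hs0 : (0:ℝ) < β ^ (n + 1) := pow_pos hβ0 _
    set s := β ^ (n + 1) with hs
    set q := p n + s • u n with hqq
    set r := ‖q‖ with hrr
    have hr1 : 1 ≤ r := hq_lb1 n
    have hr2 : r ≤ 1 + s := hq_ub n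
    have hr0 : (0:ℝ) < r := by linarith
    have d1 : dist (p n) q ≤ s := by
      rw [dist_eq_norm]
      have he : p n - q = -(s • u n) := by rw [hqq]; abel
      rw [he, norm_neg, norm_smul, Real.norm_eq_abs, abs_of_pos hs0]
      have hmul := mul_le_of_le_one_right hs0.le (hu_le n)
      linarith
    have d2 : dist q (p (n + 1)) ≤ s := by
      rw [dist_eq_norm, hpsucc n, ← hqq, ← hrr]
      have he : q - (r⁻¹ : ℝ) • q = (1 - r⁻¹) • q := by
        rw [sub_smul, one_smul]
      rw [he, norm_smul, Real.norm_eq_abs, ← hrr]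
      have habs : |1 - r⁻¹| * r = r - 1 := by
        rw [abs_of_nonneg (by
          have : r⁻¹ ≤ 1 := by
            rw [inv_le_one_iff₀]; right; exact hr1
          linarith)]
        field_simp
      rw [habs]; linarith
    calc dist (p n) (p (n + 1)) ≤ dist (p n) q + dist q (p (n + 1)) := dist_triangle _ _ _
      _ ≤ s + s := add_le_add d1 d2
      _ = 2 * β * β ^ n := by rw [hs]; ring
  have hcauchy : CauchySeq p := cauchySeq_of_le_geometric β (2 * β) hβ1 hdist
  obtain ⟨pl, hpl⟩ := cauchySeq_tendsto_of_complete hcauchy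
  have hpl1 : ‖pl‖ = 1 := by
    have h2 := hpl.norm
    have hfn : (fun n => ‖p n‖) = fun _ => (1 : ℝ) := funext hpn
    rw [hfn] at h2
    exact tendsto_nhds_unique h2 tendsto_const_nhds
  have hdistl : ∀ n, dist (p n) pl ≤ 4 * β * β ^ n := by
    intro n
    have h1 := dist_le_of_le_geometric_of_tendsto β (2 * β) hβ1 hdist hpl n
    have h2 : 2 * β * β ^ n / (1 - β) ≤ 4 * β * β ^ n := by
      rw [div_le_iff₀ (by linarith : (0:ℝ) < 1 - β)]
      have h3 : (0:ℝ) ≤ β * β ^ n := by positivity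
      nlinarith [mul_nonneg h3 (by linarith : (0:ℝ) ≤ 2 - 4 * β)]
    linarith
  -- the norming functional of the limit
  have hpl0 : pl ≠ 0 := by
    intro h0
    rw [h0, norm_zero] at hpl1
    norm_num at hpl1
  obtain ⟨F, hF1, hF2⟩ := exists_dual_vector 𝕜 pl (norm_ne_zero_iff.2 hpl0)
  have hFle : ∀ w : X, RCLike.re (F w) ≤ ‖w‖ := by
    intro w
    calc RCLike.re (F w) ≤ ‖F w‖ := RCLike.re_le_norm _
      _ ≤ ‖F‖ * ‖w‖ := F.le_opNorm w
      _ = ‖w‖ := by rw [hF1, one_mul]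
  have hFsmul : ∀ (r : ℝ) (w : X), RCLike.re (F (r • w)) = r * RCLike.re (F w) := by
    intro r w
    rw [RCLike.real_smul_eq_coe_smul (K := 𝕜) r w, map_smul, smul_eq_mul,
      ← RCLike.real_smul_eq_coe_mul, RCLike.smul_re]
  have hFpl : RCLike.re (F pl) = 1 := by rw [hF2, hpl1, RCLike.ofReal_re]
  have hFp : ∀ n, 1 - 4 * β * β ^ n ≤ RCLike.re (F (p n)) := by
    intro n
    have h1 : RCLike.re (F pl) - RCLike.re (F (p n)) ≤ ‖pl - p n‖ := by
      have he : RCLike.re (F pl) - RCLike.re (F (p n)) = RCLike.re (F (pl - p n)) := by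
        rw [map_sub, map_sub]
      rw [he]
      exact hFle _
    have h2 : ‖pl - p n‖ = dist (p n) pl := by rw [dist_eq_norm, norm_sub_rev]
    have h3 := hdistl n
    rw [hFpl] at h1
    rw [h2] at h1
    linarith
  -- extraction of the chain components
  have hFu : ∀ n, 1 - 9 * β ≤ RCLike.re (F (u n)) := by
    intro n
    have hs0 : (0:ℝ) < β ^ (n + 1) := pow_pos hβ0 _
    set s := β ^ (n + 1) with hs
    have hs1 : s ≤ β := by
      rw [hs]
      calc β ^ (n + 1) ≤ β ^ 1 := pow_le_pow_of_le_one hβ0.le hβ1.le (by omega)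
        _ = β := pow_one β
    set q := p n + s • u n with hqq
    set r := ‖q‖ with hrr
    have hr1 : 1 ≤ r := hq_lb1 n
    have hr2 : r ≤ 1 + s := hq_ub n
    have hr0 : (0:ℝ) < r := by linarith
    have hrlow : 1 + s - β * s ≤ r := by
      have h1 := hq_lb n
      have h2 : β ^ (n + 2) = β * s := by rw [hs]; ring
      rw [h2] at h1
      exact h1
    have hup2 : p (n + 1) = (r⁻¹ : ℝ) • q := by
      rw [hpsucc n, ← hqq, ← hrr]
    have hqe : q = (r : ℝ) • p (n + 1) := by
      rw [hup2, smul_smul, mul_inv_cancel₀ hr0.ne', one_smul]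
    have hFq : RCLike.re (F q) = r * RCLike.re (F (p (n + 1))) := by
      rw [hqe, hFsmul]
    have hFq2 : RCLike.re (F q) = RCLike.re (F (p n)) + s * RCLike.re (F (u n)) := by
      rw [hqq, map_add, map_add, hFsmul]
    have hA : 1 - 4 * β * s ≤ RCLike.re (F (p (n + 1))) := by
      have := hFp (n + 1)
      have he : 4 * β * β ^ (n + 1) = 4 * β * s := by rw [hs]
      rw [he] at this
      exact this
    have hpn1 : RCLike.re (F (p n)) ≤ 1 := by
      have h := hFle (p n)
      rw [hpn n] at h
      exact h
    have h4bs : 4 * β * s ≤ 1 := by nlinarith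
    have hfinal : (1 + s - β * s) * (1 - 4 * β * s) ≤ 1 + s * RCLike.re (F (u n)) := by
      calc (1 + s - β * s) * (1 - 4 * β * s) ≤ r * (1 - 4 * β * s) := by
            apply mul_le_mul_of_nonneg_right hrlow (by linarith)
        _ ≤ r * RCLike.re (F (p (n + 1))) :=
            mul_le_mul_of_nonneg_left hA (by linarith)
        _ = RCLike.re (F q) := hFq.symm
        _ = RCLike.re (F (p n)) + s * RCLike.re (F (u n)) := hFq2
        _ ≤ 1 + s * RCLike.re (F (u n)) := by linarith
    have hexp : s * (1 - 9 * β) ≤ s * RCLike.re (F (u n)) := by nlinarith [hs0, hs1, hβ0, hβ2]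
    exact (mul_le_mul_iff_right₀ hs0).mp hexp
  -- transfer through the determining family
  have hBsub : Set.range b ⊆ T '' Metric.closedBall (0 : X) 1 := by
    rintro w ⟨n, rfl⟩
    have h1 := hbS n
    rw [hSn n] at h1
    exact h1.1
  have hBhit : ∀ n, (Set.range b ∩ S n).Nonempty := fun n => ⟨b n, ⟨n, rfl⟩, hbS n⟩
  have hAcl := hDet (Set.range b) hBsub hBhit
  have hTxp0 : T x = (‖T x‖ : ℝ) • p0 := by
    rw [hp0def, RCLike.real_smul_eq_coe_smul (K := 𝕜), smul_inv_smul₀ (by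
      exact_mod_cast RCLike.ofReal_ne_zero.2 (norm_ne_zero_iff.2 hTx0))]
  have hFTx : ‖T x‖ * (1 - 4 * β) ≤ RCLike.re (F (T x)) := by
    have h1 : RCLike.re (F (T x)) = ‖T x‖ * RCLike.re (F (p 0)) := by
      conv_lhs => rw [hTxp0]
      rw [hFsmul, hp00]
    have h2 := hFp 0
    rw [pow_zero, mul_one] at h2
    rw [h1]
    apply mul_le_mul_of_nonneg_left h2 (norm_nonneg _)
  have hclaim : ∃ n, ‖T x‖ * (1 - 4 * β) - η < RCLike.re (F (b n)) := by
    by_contra hcon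
    push_neg at hcon
    have hCconv : Convex ℝ {w : X | RCLike.re (F w) ≤ ‖T x‖ * (1 - 4 * β) - η} := by
      apply convex_halfSpace_le
      exact ⟨fun a c => by rw [map_add, map_add], fun r a => by rw [hFsmul, smul_eq_mul]⟩
    have hCclosed : IsClosed {w : X | RCLike.re (F w) ≤ ‖T x‖ * (1 - 4 * β) - η} :=
      isClosed_le (RCLike.continuous_re.comp F.continuous) continuous_const
    have hsubC : Set.range b ⊆ {w : X | RCLike.re (F w) ≤ ‖T x‖ * (1 - 4 * β) - η} := by
      rintro w ⟨n, rfl⟩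
      exact hcon n
    have hAC : T '' Metric.closedBall (0 : X) 1 ⊆
        {w : X | RCLike.re (F w) ≤ ‖T x‖ * (1 - 4 * β) - η} :=
      hAcl.trans (closure_minimal (convexHull_min hsubC hCconv) hCclosed)
    have hTxA : T x ∈ T '' Metric.closedBall (0 : X) 1 :=
      ⟨x, by rw [mem_closedBall_zero_iff]; exact hx1.le, rfl⟩
    have hcontr := hAC hTxA
    rw [Set.mem_setOf_eq] at hcontr
    linarith [hFTx]
  obtain ⟨k, hk⟩ := hclaim
  refine ⟨τ k, u k, hτ_n k, hu_le k, ?_⟩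
  have hsum : RCLike.re (F (u k + τ k • T (u k))) =
      RCLike.re (F (u k)) + RCLike.re (F (b k)) := by
    rw [map_add, map_add, hbτ k]
  have hle2 := hFle (u k + τ k • T (u k))
  have e1 := hFu k
  have hb16 : β * 16 = η := by rw [hβdef]; ring
  have hμβ : μ = 128 * (β * M) + 128 * β := by
    rw [← hηeq, ← hb16]; ring
  have hβM0 : 0 ≤ β * M := by positivity
  have m1 : 4 * β * ‖T x‖ ≤ 4 * β * M :=
    mul_le_mul_of_nonneg_left hTxM (by positivity)
  have e3 : M - η - 4 * (β * M) ≤ ‖T x‖ * (1 - 4 * β) := by nlinarith [hx2.le]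
  have harith : 1 + M - ε < RCLike.re (F (u k)) + RCLike.re (F (b k)) := by
    have hsumlb : (1 - 9 * β) + (M - η - 4 * (β * M) - η) <
        RCLike.re (F (u k)) + RCLike.re (F (b k)) := by
      linarith [e1, e3, hk]
    have heps : 9 * β + 4 * (β * M) + 2 * η ≤ ε := by
      linarith [hμβ, hμε, hβM0, hβ0.le, hb16]
    linarith
  calc 1 + M - ε < RCLike.re (F (u k)) + RCLike.re (F (b k)) := harith
    _ = RCLike.re (F (u k + τ k • T (u k))) := hsum.symm
    _ ≤ ‖u k + τ k • T (u k)‖ := hle2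


end AuxSCD

/-- Let `X` be a Banach space with the alternative Daugavet property and
let `T : X → X` be a bounded linear operator such that `T(B_X)` is an SCD set. Then
`max_{|θ|=1} ‖Id + θT‖ = 1 + ‖T‖`. -/
theorem statement17 {𝕜 : Type*} [RCLike 𝕜] {X : Type*} [NormedAddCommGroup X]
    [NormedSpace ℝ X] [NormedSpace 𝕜 X] [IsScalarTower ℝ 𝕜 X] [CompleteSpace X]
    (hADP : AlternativeDaugavetProperty 𝕜 X)
    (T : X →L[𝕜] X) (hSCD : IsSCD 𝕜 (T '' Metric.closedBall (0 : X) 1)) :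
    AlternativeDaugavetEquation 𝕜 T := by
  by_cases hT : T = 0
  · subst hT
    have h00 := hADP 0 0
    have hz : (0 : X →L[𝕜] 𝕜).smulRight (0 : X) = (0 : X →L[𝕜] X) := by
      ext w; simp
    rwa [hz] at h00
  · obtain ⟨S, hSl, hDet⟩ := hSCD
    unfold AlternativeDaugavetEquation
    have himg_ne : ((fun θ : 𝕜 => ‖ContinuousLinearMap.id 𝕜 X + θ • T‖) ''
        {θ : 𝕜 | ‖θ‖ = 1}).Nonempty := ⟨_, ⟨1, by simp, rfl⟩⟩
    have hub : ∀ y ∈ (fun θ : 𝕜 => ‖ContinuousLinearMap.id 𝕜 X + θ • T‖) ''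
        {θ : 𝕜 | ‖θ‖ = 1}, y ≤ 1 + ‖T‖ := by
      rintro y ⟨θ, hθ, rfl⟩
      have hθ1 : ‖θ‖ = 1 := hθ
      calc ‖ContinuousLinearMap.id 𝕜 X + θ • T‖ ≤ ‖ContinuousLinearMap.id 𝕜 X‖ + ‖θ • T‖ :=
            norm_add_le _ _
        _ ≤ 1 + ‖T‖ := by
            have h1 : ‖ContinuousLinearMap.id 𝕜 X‖ ≤ 1 := ContinuousLinearMap.norm_id_le
            have h2 : ‖θ • T‖ = ‖T‖ := by
              have h3 := norm_smul (α := 𝕜) (β := X →L[𝕜] X) θ T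
              rw [h3, hθ1, one_mul]
            linarith
    have hbdd : BddAbove ((fun θ : 𝕜 => ‖ContinuousLinearMap.id 𝕜 X + θ • T‖) ''
        {θ : 𝕜 | ‖θ‖ = 1}) := ⟨1 + ‖T‖, fun y hy => hub y hy⟩
    refine le_antisymm (csSup_le himg_ne hub) ?_
    refine le_of_forall_pos_le_add fun ε hε => ?_
    obtain ⟨θ, z, hθ1, hz1, hgt⟩ := key_pair hADP T hT S hSl hDet hε
    have hop : ‖z + θ • T z‖ ≤ ‖ContinuousLinearMap.id 𝕜 X + θ • T‖ := by
      have happ : (ContinuousLinearMap.id 𝕜 X + θ • T) z = z + θ • T z := by simp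
      calc ‖z + θ • T z‖ = ‖(ContinuousLinearMap.id 𝕜 X + θ • T) z‖ := by rw [happ]
        _ ≤ ‖ContinuousLinearMap.id 𝕜 X + θ • T‖ * ‖z‖ := ContinuousLinearMap.le_opNorm _ _
        _ ≤ ‖ContinuousLinearMap.id 𝕜 X + θ • T‖ * 1 :=
            mul_le_mul_of_nonneg_left hz1 (norm_nonneg _)
        _ = ‖ContinuousLinearMap.id 𝕜 X + θ • T‖ := mul_one _
    have hmem : ‖ContinuousLinearMap.id 𝕜 X + θ • T‖ ∈
        (fun θ : 𝕜 => ‖ContinuousLinearMap.id 𝕜 X + θ • T‖) '' {θ : 𝕜 | ‖θ‖ = 1} :=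
      ⟨θ, hθ1, rfl⟩
    have hle := le_csSup hbdd hmem
    linarith
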